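/- arXiv:2403.00967 — 4 statements merged into one kernel-verified Lean document; each statement's English description precedes it below -/
import Mathlib

section
/- Let m ≥ 2 be an integer and H ∈ (1/2, (m+1)/(2m)). Suppose α_i : ℝ → [0,∞) for i = 1,...,m satisfy α_i(x) ≤ C · min(1, |x|^{2H-2}) for all x ∈ ℝ and some constant C > 0. Then the integral ∫_{ℝ^{m-1}} α_1(x_1) α_2(x_1 - x_2) ⋯ α_{m-1}(x_{m-2} - x_{m-1}) α_m(x_{m-1}) dx_1 ⋯ dx_{m-1} is finite. -/
/-!
Every `αᵢ` is dominated by the even kernel `g x = C * min 1 (|x| ^ (2H - 2))`, and integrating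
out `x₁, …, x_{m-2}` one after the other (Tonelli) turns the chain integral of `g` into
`∫ Fₘ₋₂ * g`, where `F₀ = g` and `Fₖ₊₁ = Fₖ ⋆ g`. The assumption `H < (m + 1) / (2m)` says
exactly that `g ∈ L^q` for `q = m / (m - 1)`. Young's inequality `‖f ⋆ g‖ᵣ ≤ ‖f‖ₚ ‖g‖_q`
(`1/p + 1/q = 1 + 1/r`) then gives `Fₖ ∈ L^{m/(m-1-k)}`, so `Fₘ₋₂ ∈ Lᵐ`, and Hölder's inequality
for the conjugate exponents `m` and `q` bounds `∫ Fₘ₋₂ * g`.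
-/

open MeasureTheory Real
open scoped ENNReal

theorem Real.min_rpow {a b q : ℝ} (ha : 0 ≤ a) (hb : 0 ≤ b) (hq : 0 ≤ q) :
    min a b ^ q = min (a ^ q) (b ^ q) := by
  rcases le_total a b with h | h
  · rw [min_eq_left h, min_eq_left (rpow_le_rpow ha h hq)]
  · rw [min_eq_right h, min_eq_right (rpow_le_rpow hb h hq)]

theorem ENNReal.rpow_mul_rpow_eq_self (a : ℝ≥0∞) {c u v : ℝ} (hu : 0 ≤ c * u)
    (hv : 0 ≤ c * v) (h : c * u + c * v = 1) : (a ^ c) ^ u * (a ^ c) ^ v = a := by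
  rw [← ENNReal.rpow_mul, ← ENNReal.rpow_mul, ← ENNReal.rpow_add_of_nonneg _ _ hu hv, h,
    ENNReal.rpow_one]

namespace ChainIntegral

variable {G : Type*} [MeasurableSpace G]

theorem lintegral_pi_fin_succ {n : ℕ} (μ : Measure G) [SigmaFinite μ]
    {F : (Fin (n + 1) → G) → ℝ≥0∞} (hF : Measurable F) :
    ∫⁻ x, F x ∂Measure.pi (fun _ => μ) =
      ∫⁻ y, ∫⁻ a, F (Fin.cons a y) ∂μ ∂Measure.pi (fun _ => μ) := by
  have hmp := (measurePreserving_piFinSuccAbove (fun _ : Fin (n + 1) => μ) 0).symm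
  rw [← hmp.lintegral_comp hF, lintegral_prod_symm (fun z => F _)
    (hF.comp hmp.measurable).aemeasurable]
  simp [Fin.consEquiv]

variable [AddCommGroup G] [MeasurableAdd₂ G] [MeasurableNeg G] (μ : Measure G)
  {f g h : G → ℝ≥0∞} {p q r : ℝ}

theorem measurable_iterate_lconvolution [SFinite μ] (hf : Measurable f) (hg : Measurable g)
    (k : ℕ) : Measurable ((· ⋆ₗ[μ] g)^[k] f) := by
  induction k with
  | zero => exact hf
  | succ k ih =>
    rw [Function.iterate_succ_apply']
    exact measurable_lconvolution μ ih hg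

theorem lintegral_chain_eq [SigmaFinite μ] (hf : Measurable f) (hg : Measurable g)
    (hh : Measurable h) (n : ℕ) :
    ∫⁻ x : Fin (n + 1) → G, f (x 0) * (∏ j : Fin n, g (-x j.castSucc + x j.succ)) *
        h (x (Fin.last n)) ∂Measure.pi (fun _ => μ) =
      ∫⁻ t, (· ⋆ₗ[μ] g)^[n] f t * h t ∂μ := by
  induction n generalizing f with
  | zero =>
    simp only [Finset.univ_eq_empty, Finset.prod_empty, mul_one, Fin.last_zero,
      Function.iterate_zero_apply]
    exact (measurePreserving_funUnique μ (Fin 1)).lintegral_comp (hf.mul hh)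
  | succ n ih =>
    rw [lintegral_pi_fin_succ μ (by fun_prop)]
    simp only [Fin.cons_zero, Fin.cons_succ, Fin.prod_univ_succ, Fin.castSucc_zero,
      Fin.castSucc_succ, Fin.cons_last]
    have hinner (y : Fin (n + 1) → G) :
        ∫⁻ a, f a * (g (-a + y 0) * ∏ j : Fin n, g (-y j.castSucc + y j.succ)) *
          h (y (Fin.last n)) ∂μ =
        (f ⋆ₗ[μ] g) (y 0) * (∏ j : Fin n, g (-y j.castSucc + y j.succ)) * h (y (Fin.last n)) := by
      simp_rw [← mul_assoc]
      rw [lintegral_mul_const _ (by fun_prop), lintegral_mul_const _ (by fun_prop)]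
      rfl
    rw [lintegral_congr hinner, ih (measurable_lconvolution μ hf hg),
      Function.iterate_succ_apply]

section Young

variable [μ.IsAddLeftInvariant] [μ.IsNegInvariant]

/-- Hölder's inequality for the three factors `(f ^ p * g ^ q) ^ r⁻¹`, `(f ^ p) ^ (1 - q⁻¹)` and
`(g ^ q) ^ (1 - p⁻¹)` of `f * g`, raised to the power `r`. -/
theorem lconvolution_rpow_le (hf : Measurable f) (hg : Measurable g)
    (hp : 1 ≤ p) (hq : 1 ≤ q) (hr : 0 < r) (hpqr : p⁻¹ + q⁻¹ = 1 + r⁻¹) (x : G) :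
    (f ⋆ₗ[μ] g) x ^ r ≤ (∫⁻ y, f y ^ p * g (-y + x) ^ q ∂μ) *
      ((∫⁻ y, f y ^ p ∂μ) ^ (r * (1 - q⁻¹)) * (∫⁻ y, g y ^ q ∂μ) ^ (r * (1 - p⁻¹))) := by
  have hp0 : 0 < p := by linarith
  have hq0 : 0 < q := by linarith
  have hq' : 0 ≤ 1 - q⁻¹ := sub_nonneg.2 (inv_le_one_of_one_le₀ hq)
  have hp' : 0 ≤ 1 - p⁻¹ := sub_nonneg.2 (inv_le_one_of_one_le₀ hp)
  set F : Fin 3 → G → ℝ≥0∞ :=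
    ![fun y => f y ^ p * g (-y + x) ^ q, fun y => f y ^ p, fun y => g (-y + x) ^ q]
  set w : Fin 3 → ℝ := ![r⁻¹, 1 - q⁻¹, 1 - p⁻¹]
  have hw : ∀ i ∈ Finset.univ, 0 ≤ w i := by
    intro i _
    fin_cases i
    exacts [inv_nonneg.2 hr.le, hq', hp']
  have hw_sum : ∑ i, w i = 1 := by
    rw [Fin.sum_univ_three]
    change r⁻¹ + (1 - q⁻¹) + (1 - p⁻¹) = 1
    linarith
  have hgx : Measurable fun y => g (-y + x) ^ q := by fun_prop
  have hF : ∀ i ∈ Finset.univ, AEMeasurable (F i) μ := by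
    intro i _
    fin_cases i
    exacts [(hf.pow_const p |>.mul hgx).aemeasurable, (hf.pow_const p).aemeasurable,
      hgx.aemeasurable]
  have hprod (y : G) : ∏ i, F i y ^ w i = f y * g (-y + x) := by
    simp only [F, w, Fin.prod_univ_three, Matrix.cons_val_zero, Matrix.cons_val_one,
      Matrix.cons_val_two, Matrix.head_cons, Matrix.tail_cons]
    rw [ENNReal.mul_rpow_of_nonneg _ _ (by positivity),
      show ∀ a b c d : ℝ≥0∞, a * b * c * d = a * c * (b * d) from fun _ _ _ _ => by ring,
      ENNReal.rpow_mul_rpow_eq_self _ (by positivity) (by positivity),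
      ENNReal.rpow_mul_rpow_eq_self _ (by positivity) (by positivity)]
    · rw [← mul_add, show r⁻¹ + (1 - p⁻¹) = q⁻¹ by linarith, mul_inv_cancel₀ hq0.ne']
    · rw [← mul_add, show r⁻¹ + (1 - q⁻¹) = p⁻¹ by linarith, mul_inv_cancel₀ hp0.ne']
  have holder := ENNReal.lintegral_prod_norm_pow_le Finset.univ hF hw_sum hw
  simp only [hprod, F, w, Fin.prod_univ_three, Matrix.cons_val_zero, Matrix.cons_val_one,
      Matrix.cons_val_two, Matrix.head_cons, Matrix.tail_cons] at holder
  have htrans : ∫⁻ y, g (-y + x) ^ q ∂μ = ∫⁻ y, g y ^ q ∂μ := by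
    simp_rw [neg_add_eq_sub]
    exact lintegral_sub_left_eq_self (fun y => g y ^ q) x
  rw [htrans] at holder
  calc (f ⋆ₗ[μ] g) x ^ r
      ≤ ((∫⁻ y, f y ^ p * g (-y + x) ^ q ∂μ) ^ r⁻¹ * (∫⁻ y, f y ^ p ∂μ) ^ (1 - q⁻¹) *
          (∫⁻ y, g y ^ q ∂μ) ^ (1 - p⁻¹)) ^ r := ENNReal.rpow_le_rpow holder hr.le
    _ = _ := by
      rw [ENNReal.mul_rpow_of_nonneg _ _ hr.le, ENNReal.mul_rpow_of_nonneg _ _ hr.le,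
        ← ENNReal.rpow_mul, ← ENNReal.rpow_mul, ← ENNReal.rpow_mul, inv_mul_cancel₀ hr.ne',
        ENNReal.rpow_one, mul_assoc, mul_comm (1 - q⁻¹), mul_comm (1 - p⁻¹)]

/-- Young's convolution inequality `‖f ⋆ g‖ᵣ ≤ ‖f‖ₚ ‖g‖_q`, raised to the power `r`. -/
theorem lintegral_lconvolution_rpow_le [SFinite μ] (hf : Measurable f) (hg : Measurable g)
    (hp : 1 ≤ p) (hq : 1 ≤ q) (hr : 0 < r) (hpqr : p⁻¹ + q⁻¹ = 1 + r⁻¹) :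
    ∫⁻ x, (f ⋆ₗ[μ] g) x ^ r ∂μ ≤ (∫⁻ y, f y ^ p ∂μ) ^ (r / p) * (∫⁻ y, g y ^ q ∂μ) ^ (r / q) := by
  set A := ∫⁻ y, f y ^ p ∂μ
  set B := ∫⁻ y, g y ^ q ∂μ
  have hmeas : Measurable (Function.uncurry fun x y => f y ^ p * g (-y + x) ^ q) := by
    fun_prop
  calc ∫⁻ x, (f ⋆ₗ[μ] g) x ^ r ∂μ
      ≤ ∫⁻ x, (∫⁻ y, f y ^ p * g (-y + x) ^ q ∂μ) *
          (A ^ (r * (1 - q⁻¹)) * B ^ (r * (1 - p⁻¹))) ∂μ :=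
        lintegral_mono (lconvolution_rpow_le μ hf hg hp hq hr hpqr)
    _ = (∫⁻ y, ∫⁻ x, f y ^ p * g (-y + x) ^ q ∂μ ∂μ) *
          (A ^ (r * (1 - q⁻¹)) * B ^ (r * (1 - p⁻¹))) := by
        rw [lintegral_mul_const _ ?_, lintegral_lintegral_swap hmeas.aemeasurable]
        exact hmeas.lintegral_prod_right'
    _ = A * B * (A ^ (r * (1 - q⁻¹)) * B ^ (r * (1 - p⁻¹))) := by
        have hinner (y : G) : ∫⁻ x, f y ^ p * g (-y + x) ^ q ∂μ = f y ^ p * B := by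
          rw [lintegral_const_mul _ (by fun_prop),
            lintegral_add_left_eq_self (fun x => g x ^ q)]
        rw [lintegral_congr hinner, lintegral_mul_const _ (by fun_prop)]
    _ = A ^ (r / p) * B ^ (r / q) := by
        have hrr : r * r⁻¹ = 1 := mul_inv_cancel₀ hr.ne'
        rw [div_eq_mul_inv, div_eq_mul_inv,
          show r * p⁻¹ = 1 + r * (1 - q⁻¹) by linear_combination r * hpqr + hrr,
          show r * q⁻¹ = 1 + r * (1 - p⁻¹) by linear_combination r * hpqr + hrr,
          ENNReal.rpow_add_of_nonneg _ _ zero_le_one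
            (mul_nonneg hr.le (sub_nonneg.2 (inv_le_one_of_one_le₀ hq))),
          ENNReal.rpow_add_of_nonneg _ _ zero_le_one
            (mul_nonneg hr.le (sub_nonneg.2 (inv_le_one_of_one_le₀ hp))),
          ENNReal.rpow_one, ENNReal.rpow_one]
        ring

/-- With `1 / q = 1 - a`, each convolution with `g` lowers the reciprocal exponent by `a`. -/
theorem lintegral_iterate_lconvolution_rpow_lt_top [SFinite μ] (hf : Measurable f)
    (hg : Measurable g) (hq : 1 ≤ q) (hfq : ∫⁻ x, f x ^ q ∂μ < ⊤) (hgq : ∫⁻ x, g x ^ q ∂μ < ⊤)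
    {k : ℕ} (hk : (k + 1) * (1 - q⁻¹) < 1) :
    ∫⁻ x, (· ⋆ₗ[μ] g)^[k] f x ^ (1 - (k + 1) * (1 - q⁻¹))⁻¹ ∂μ < ⊤ := by
  have ha : 0 ≤ 1 - q⁻¹ := sub_nonneg.2 (inv_le_one_of_one_le₀ hq)
  induction k with
  | zero => simpa using hfq
  | succ k ih =>
    push_cast at hk ⊢
    have hk' : (k + 1) * (1 - q⁻¹) < 1 := by nlinarith
    have hp : 1 ≤ (1 - (k + 1) * (1 - q⁻¹))⁻¹ :=
      one_le_inv₀ (by linarith) |>.2 (by nlinarith)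
    rw [Function.iterate_succ_apply']
    refine (lintegral_lconvolution_rpow_le μ (measurable_iterate_lconvolution μ hf hg k) hg hp hq
      (r := (1 - (k + 1 + 1) * (1 - q⁻¹))⁻¹) (inv_pos.2 (by linarith))
      (by rw [inv_inv, inv_inv]; ring)).trans_lt (ENNReal.mul_lt_top ?_ ?_)
    · exact ENNReal.rpow_lt_top_of_nonneg (by positivity) (ih hk').ne
    · exact ENNReal.rpow_lt_top_of_nonneg (by positivity) hgq.ne

theorem lintegral_chain_lt_top [SigmaFinite μ] (hf : Measurable f) (hg : Measurable g)
    (hh : Measurable h) (n : ℕ) (hfq : ∫⁻ x, f x ^ ((n + 2) / (n + 1) : ℝ) ∂μ < ⊤)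
    (hgq : ∫⁻ x, g x ^ ((n + 2) / (n + 1) : ℝ) ∂μ < ⊤)
    (hhq : ∫⁻ x, h x ^ ((n + 2) / (n + 1) : ℝ) ∂μ < ⊤) :
    ∫⁻ x : Fin (n + 1) → G, f (x 0) * (∏ j : Fin n, g (-x j.castSucc + x j.succ)) *
        h (x (Fin.last n)) ∂Measure.pi (fun _ => μ) < ⊤ := by
  set q : ℝ := (n + 2) / (n + 1)
  have hq : 1 ≤ q := (one_le_div (by positivity)).2 (by linarith)
  have hdefect : 1 - q⁻¹ = (n + 2 : ℝ)⁻¹ := by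
    simp only [q, inv_div]; field_simp; ring
  have hconj : (n + 2 : ℝ).HolderConjugate q := by
    rw [Real.holderConjugate_iff]
    exact ⟨by linarith [n.cast_nonneg (α := ℝ)], by linarith⟩
  have hFn := lintegral_iterate_lconvolution_rpow_lt_top μ hf hg hq hfq hgq (k := n)
    (by rw [hdefect, ← div_eq_mul_inv, div_lt_one (by positivity)]; linarith)
  rw [show (1 - (n + 1) * (1 - q⁻¹))⁻¹ = (n + 2 : ℝ) by rw [hdefect]; field_simp; ring] at hFn
  rw [lintegral_chain_eq μ hf hg hh]
  refine (ENNReal.lintegral_mul_le_Lp_mul_Lq μ hconj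
    (measurable_iterate_lconvolution μ hf hg n).aemeasurable hh.aemeasurable).trans_lt
    (ENNReal.mul_lt_top ?_ ?_)
  · exact ENNReal.rpow_lt_top_of_nonneg (by positivity) hFn.ne
  · exact ENNReal.rpow_lt_top_of_nonneg (by positivity) hhq.ne

end Young

theorem min_one_abs_rpow_le {c : ℝ} (hc : c ≤ 0) (x : ℝ) :
    min 1 (|x| ^ c) ≤ 2 ^ (-c) * (1 + |x|) ^ c := by
  have h2c : (2 : ℝ) ^ (-c) * 2 ^ c = 1 := by rw [← rpow_add two_pos, neg_add_cancel, rpow_zero]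
  rcases le_total |x| 1 with hx | hx
  · calc min 1 (|x| ^ c) ≤ 2 ^ (-c) * 2 ^ c := h2c ▸ min_le_left _ _
      _ ≤ 2 ^ (-c) * (1 + |x|) ^ c := mul_le_mul_of_nonneg_left
        (rpow_le_rpow_of_nonpos (by positivity) (by linarith) hc) (by positivity)
  · calc min 1 (|x| ^ c) ≤ 2 ^ (-c) * (2 * |x|) ^ c := by
          rw [mul_rpow zero_le_two (abs_nonneg x), ← mul_assoc, h2c, one_mul]
          exact min_le_right _ _
      _ ≤ 2 ^ (-c) * (1 + |x|) ^ c := mul_le_mul_of_nonneg_left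
        (rpow_le_rpow_of_nonpos (by positivity) (by linarith) hc) (by positivity)

theorem integrable_min_one_abs_rpow {c : ℝ} (hc : c < -1) :
    Integrable fun x : ℝ => min 1 (|x| ^ c) := by
  have hdom : Integrable fun x : ℝ => 2 ^ (-c) * (1 + ‖x‖) ^ (-(-c)) :=
    (integrable_one_add_norm (by simp; linarith)).const_mul _
  refine hdom.mono' (by fun_prop : Measurable fun x : ℝ => min 1 (|x| ^ c)).aestronglyMeasurable
    (.of_forall fun x => ?_)
  rw [neg_neg, Real.norm_eq_abs, Real.norm_eq_abs,
    abs_of_nonneg (le_min zero_le_one (by positivity))]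
  exact min_one_abs_rpow_le (by linarith) x

theorem lintegral_ofReal_mul_min_one_abs_rpow_rpow_lt_top (C : ℝ) {b q : ℝ} (hq : 0 < q)
    (hbq : b * q < -1) : ∫⁻ x : ℝ, ENNReal.ofReal (C * min 1 (|x| ^ b)) ^ q < ⊤ := by
  have hpow (x : ℝ) : ENNReal.ofReal (C * min 1 (|x| ^ b)) ^ q =
      ENNReal.ofReal C ^ q * ENNReal.ofReal (min 1 (|x| ^ (b * q))) := by
    have hmin : 0 ≤ min 1 (|x| ^ b) := le_min zero_le_one (by positivity)
    rw [ENNReal.ofReal_mul' hmin, ENNReal.mul_rpow_of_nonneg _ _ hq.le,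
      ENNReal.ofReal_rpow_of_nonneg hmin hq.le, min_rpow zero_le_one (by positivity) hq.le,
      one_rpow, ← rpow_mul (abs_nonneg x)]
  rw [lintegral_congr hpow, lintegral_const_mul _ (by fun_prop)]
  exact ENNReal.mul_lt_top (ENNReal.rpow_lt_top_of_nonneg hq.le ENNReal.ofReal_ne_top)
    (integrable_min_one_abs_rpow hbq).lintegral_lt_top

theorem prod_Ico_eq_prod_fin {X M : Type*} [CommMonoid M] {n : ℕ} (φ : X → X → M) (y : ℕ → X)
    (x : Fin (n + 1) → X) (hxy : ∀ i : Fin (n + 1), y i = x i) :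
    ∏ j ∈ Finset.Ico 1 (n + 1), φ (y (j - 1)) (y j) = ∏ j : Fin n, φ (x j.castSucc) (x j.succ) := by
  rw [Finset.prod_Ico_eq_prod_range, Nat.add_sub_cancel, ← Fin.prod_univ_eq_prod_range]
  refine Finset.prod_congr rfl fun j _ => ?_
  rw [Nat.add_sub_cancel_left, ← hxy, ← hxy, add_comm]
  rfl

theorem ofReal_mul_prod_mul_le {ι : Type*} {s : Finset ι} {a b : ℝ} {c : ι → ℝ}
    {A B : ℝ≥0∞} {D : ι → ℝ≥0∞} (ha : 0 ≤ a) (hc : ∀ i ∈ s, 0 ≤ c i)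
    (hA : ENNReal.ofReal a ≤ A) (hD : ∀ i ∈ s, ENNReal.ofReal (c i) ≤ D i)
    (hB : ENNReal.ofReal b ≤ B) :
    ENNReal.ofReal (a * (∏ i ∈ s, c i) * b) ≤ A * (∏ i ∈ s, D i) * B := by
  rw [ENNReal.ofReal_mul (mul_nonneg ha (Finset.prod_nonneg hc)), ENNReal.ofReal_mul ha,
    ENNReal.ofReal_prod_of_nonneg hc]
  exact mul_le_mul' (mul_le_mul' hA (Finset.prod_le_prod' hD)) hB

end ChainIntegral

open ChainIntegral

theorem convolution_chain_integral_finite_general (m : ℕ) (hm : 2 ≤ m) (H : ℝ)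
    (hH : H ∈ Set.Ioo (1/2 : ℝ) ((m + 1) / (2 * m) : ℝ))
    (C : ℝ) (α : ℕ → ℝ → ℝ)
    (hnonneg : ∀ i < m, ∀ x : ℝ, 0 ≤ α i x)
    (hbound : ∀ i < m, ∀ x : ℝ, α i x ≤ C * min 1 (|x| ^ (2 * H - 2))) :
    (∫⁻ x : Fin (m - 1) → ℝ, ENNReal.ofReal
      ((fun x' : ℕ → ℝ =>
          α 0 (x' 0) * (∏ j ∈ Finset.Ico 1 (m - 1), α j (x' (j - 1) - x' j))
            * α (m - 1) (x' (m - 2)))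
        (fun n => if h : n < m - 1 then x ⟨n, h⟩ else 0))) < ⊤ := by
  obtain ⟨n, rfl⟩ : ∃ n, m = n + 2 := ⟨m - 2, by omega⟩
  set g : ℝ → ℝ≥0∞ := fun x => ENNReal.ofReal (C * min 1 (|x| ^ (2 * H - 2)))
  have hg : Measurable g := by fun_prop
  have hgq : ∫⁻ x, g x ^ ((n + 2) / (n + 1) : ℝ) < ⊤ := by
    refine lintegral_ofReal_mul_min_one_abs_rpow_rpow_lt_top C (by positivity) ?_
    have hH2 := hH.2
    push_cast at hH2
    rw [lt_div_iff₀ (by positivity)] at hH2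
    rw [← mul_div_assoc, div_lt_iff₀ (by positivity)]
    linarith
  refine lt_of_le_of_lt (lintegral_mono fun x => ?_)
    (lintegral_chain_lt_top volume hg hg hg n hgq hgq hgq)
  set y : ℕ → ℝ := fun i => if h : i < n + 1 then x ⟨i, h⟩ else 0
  have hy (i : Fin (n + 1)) : y i = x i := dif_pos i.isLt
  have hαg (i : ℕ) (hi : i < n + 2) (t : ℝ) : ENNReal.ofReal (α i t) ≤ g t :=
    ENNReal.ofReal_le_ofReal (hbound i hi t)
  have hg_symm (a b : ℝ) : g (-a + b) = g (a - b) := by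
    simp only [g, neg_add_eq_sub, abs_sub_comm b a]
  rw [← prod_Ico_eq_prod_fin (fun a b => g (-a + b)) y x hy, ← hy 0, ← hy (Fin.last n)]
  simp only [Fin.val_zero, Fin.val_last, Nat.add_sub_cancel, hg_symm]
  exact ofReal_mul_prod_mul_le (hnonneg 0 (by omega) _) (fun j hj => hnonneg j (by grind) _)
    (hαg 0 (by omega) _) (fun j hj => hαg j (by grind) _) (hαg _ (by omega) _)

theorem convolution_chain_integral_finite (m : ℕ) (hm : 2 ≤ m) (H : ℝ)
    (hH : H ∈ Set.Ioo (1/2 : ℝ) ((m + 1) / (2 * m) : ℝ))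
    (C : ℝ) (hC : 0 < C) (α : ℕ → ℝ → ℝ)
    (hnonneg : ∀ i < m, ∀ x : ℝ, 0 ≤ α i x)
    (hbound : ∀ i < m, ∀ x : ℝ, α i x ≤ C * min 1 (|x| ^ (2 * H - 2))) :
    (∫⁻ x : Fin (m - 1) → ℝ, ENNReal.ofReal
      ((fun x' : ℕ → ℝ =>
          α 0 (x' 0) * (∏ j ∈ Finset.Ico 1 (m - 1), α j (x' (j - 1) - x' j))
            * α (m - 1) (x' (m - 2)))
        (fun n => if h : n < m - 1 then x ⟨n, h⟩ else 0))) < ⊤ :=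
  convolution_chain_integral_finite_general m hm H hH C α hnonneg hbound
end

section
/- Let m ≥ 2 and let p_1, ..., p_m > -1 be real numbers with p_1 + ⋯ + p_m + m - 1 > 0. Then the cyclic integral B_m(p_1,...,p_m) = ∫_{[0,1]^m} |x_1 - x_2|^{p_1} |x_2 - x_3|^{p_2} ⋯ |x_{m-1} - x_m|^{p_{m-1}} |x_m - x_1|^{p_m} dx_1⋯dx_m is finite. -/
/-!
If some exponent `p j` is nonnegative, the factor `|x j - x (j + 1)| ^ p j` is at most `1` on
the cube, and what is left is a product along a path through all vertices. Integrating the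
vertices out one at a time from one end of the path costs a factor
`∫₀¹ |a - t| ^ q dt ≤ 2 / (q + 1)` per edge.

If all exponents are negative, split the cube according to which edge `j` is longest. There
`|x j - x (j + 1)| ^ p j ≤ ∏_{i ≠ j} |x i - x (i + 1)| ^ (w i * p j)` with weights
`w i = (1 + p i) / ∑_{k ≠ j} (1 + p k)`, which leaves a path with exponents `p i + w i * p j`.
These exceed `-1` exactly because `∑ p i + m - 1 > 0`.
-/

open MeasureTheory Real

/-- Cyclic lookup of coordinates: `cyc x n = x (n % m)`. -/
def cyc {m : ℕ} (x : Fin m → ℝ) (n : ℕ) : ℝ :=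
  if h : 0 < m then x ⟨n % m, Nat.mod_lt n h⟩ else 0

open Set Finset

theorem lintegral_Icc_abs_rpow {c q : ℝ} (hc : 0 ≤ c) (hq : -1 < q) :
    ∫⁻ s in Icc 0 c, ENNReal.ofReal (|s| ^ q) = ENNReal.ofReal (c ^ (q + 1) / (q + 1)) := by
  have hint : IntegrableOn (fun s : ℝ => s ^ q) (Icc 0 c) :=
    (intervalIntegrable_iff_integrableOn_Icc_of_le hc).1
      (intervalIntegral.intervalIntegrable_rpow' hq)
  rw [setLIntegral_congr_fun measurableSet_Icc fun s hs => by rw [abs_of_nonneg hs.1],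
    ← ofReal_integral_eq_lintegral_ofReal hint, integral_Icc_eq_integral_Ioc,
    ← intervalIntegral.integral_of_le hc, integral_rpow (Or.inl hq), zero_rpow (by linarith),
    sub_zero]
  filter_upwards [ae_restrict_mem measurableSet_Icc] with s hs using rpow_nonneg hs.1 q

theorem lintegral_abs_sub_rpow_le {a q : ℝ} (ha : a ∈ Icc (0 : ℝ) 1) (hq : -1 < q) :
    ∫⁻ t in Icc 0 1, ENNReal.ofReal (|a - t| ^ q) ≤ ENNReal.ofReal (2 / (q + 1)) := by
  have hq1 : 0 < q + 1 := by linarith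
  have hmeas : Measurable fun s : ℝ => ENNReal.ofReal (|s| ^ q) := by fun_prop
  have hpiece : ∀ c ∈ Icc (0 : ℝ) 1,
      ∫⁻ s in Icc 0 c, ENNReal.ofReal (|s| ^ q) ≤ ENNReal.ofReal (1 / (q + 1)) := by
    intro c hc
    rw [lintegral_Icc_abs_rpow hc.1 hq]
    exact ENNReal.ofReal_le_ofReal
      (div_le_div_of_nonneg_right (rpow_le_one hc.1 hc.2 hq1.le) hq1.le)
  have hleft : ∫⁻ t in Icc 0 a, ENNReal.ofReal (|a - t| ^ q) =
      ∫⁻ s in Icc 0 a, ENNReal.ofReal (|s| ^ q) := by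
    simpa using (Measure.measurePreserving_sub_left volume a).setLIntegral_comp_preimage
      (measurableSet_Icc (a := 0) (b := a)) hmeas
  have hright : ∫⁻ t in Icc a 1, ENNReal.ofReal (|a - t| ^ q) =
      ∫⁻ s in Icc 0 (1 - a), ENNReal.ofReal (|s| ^ q) := by
    simpa [abs_sub_comm] using (measurePreserving_sub_right volume a).setLIntegral_comp_preimage
      (measurableSet_Icc (a := 0) (b := 1 - a)) hmeas
  calc ∫⁻ t in Icc 0 1, ENNReal.ofReal (|a - t| ^ q)
      = ∫⁻ t in Icc 0 a ∪ Icc a 1, ENNReal.ofReal (|a - t| ^ q) := by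
        rw [Icc_union_Icc_eq_Icc ha.1 ha.2]
    _ ≤ ENNReal.ofReal (1 / (q + 1)) + ENNReal.ofReal (1 / (q + 1)) := by
        refine (lintegral_union_le _ _ _).trans ?_
        rw [hleft, hright]
        exact add_le_add (hpiece a ha) (hpiece (1 - a) ⟨by linarith [ha.2], by linarith [ha.1]⟩)
    _ = ENNReal.ofReal (2 / (q + 1)) := by
        rw [← ENNReal.ofReal_add (by positivity) (by positivity)]
        ring_nf

theorem ae_pi_restrict_forall_mem {ι α : Type*} [Fintype ι] [MeasurableSpace α]
    (μ : Measure α) [SigmaFinite μ] {s : Set α} (hs : MeasurableSet s) :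
    ∀ᵐ x ∂Measure.pi (fun _ : ι => μ.restrict s), ∀ i, x i ∈ s :=
  ae_all_iff.2 fun _ => Measure.tendsto_eval_ae_ae.eventually (ae_restrict_mem hs)

theorem lintegral_pi_comp_equiv {ι α : Type*} [Fintype ι] [MeasurableSpace α] (μ : Measure α)
    [SigmaFinite μ] (e : ι ≃ ι) (f : (ι → α) → ENNReal) :
    ∫⁻ x, f (x ∘ e) ∂Measure.pi (fun _ => μ) = ∫⁻ x, f x ∂Measure.pi (fun _ => μ) :=
  (measurePreserving_piCongrLeft (fun _ => μ) e).symm.lintegral_comp_emb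
    (MeasurableEquiv.measurableEmbedding _) f

theorem lintegral_prod_path_le (n : ℕ) (q : Fin n → ℝ) (hq : ∀ t, -1 < q t) :
    ∫⁻ x, ∏ t : Fin n, ENNReal.ofReal (|x t.castSucc - x t.succ| ^ q t)
        ∂Measure.pi (fun _ : Fin (n + 1) => volume.restrict (Icc (0 : ℝ) 1)) ≤
      ∏ t, ENNReal.ofReal (2 / (q t + 1)) := by
  induction n with
  | zero => simp [Measure.pi_univ]
  | succ n ih =>
    set μ := volume.restrict (Icc (0 : ℝ) 1)
    set ν := Measure.pi fun _ : Fin (n + 1) => μ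
    rw [← (measurePreserving_piFinSuccAbove (fun _ => μ) 0).symm.lintegral_comp_emb
      (MeasurableEquiv.measurableEmbedding _), lintegral_prod_symm _ (by fun_prop)]
    simp only [MeasurableEquiv.piFinSuccAbove_symm_apply, Fin.insertNthEquiv, Fin.insertNth_zero',
      Equiv.coe_fn_mk, Fin.prod_univ_succ, ← Fin.succ_castSucc, Fin.castSucc_zero, Fin.cons_zero,
      Fin.cons_succ]
    calc ∫⁻ y, ∫⁻ a, ENNReal.ofReal (|a - y 0| ^ q 0) *
            ∏ t : Fin n, ENNReal.ofReal (|y t.castSucc - y t.succ| ^ q t.succ) ∂μ ∂ν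
        = ∫⁻ y, (∫⁻ a, ENNReal.ofReal (|y 0 - a| ^ q 0) ∂μ) *
            ∏ t : Fin n, ENNReal.ofReal (|y t.castSucc - y t.succ| ^ q t.succ) ∂ν := by
          refine lintegral_congr fun y => ?_
          simp_rw [abs_sub_comm _ (y 0)]
          exact lintegral_mul_const _ (by fun_prop)
      _ ≤ ∫⁻ y, ENNReal.ofReal (2 / (q 0 + 1)) *
            ∏ t : Fin n, ENNReal.ofReal (|y t.castSucc - y t.succ| ^ q t.succ) ∂ν := by
          refine lintegral_mono_ae ?_
          filter_upwards [ae_pi_restrict_forall_mem volume measurableSet_Icc] with y hy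
          gcongr
          exact lintegral_abs_sub_rpow_le (hy 0) (hq 0)
      _ ≤ ENNReal.ofReal (2 / (q 0 + 1)) *
            ∏ t : Fin n, ENNReal.ofReal (2 / (q t.succ + 1)) := by
          rw [lintegral_const_mul _ (by fun_prop)]
          gcongr
          exact ih _ fun t => hq t.succ

theorem Fin.prod_univ_erase_eq_prod_add_succ {M : Type*} [CommMonoid M] {n : ℕ}
    (f : Fin (n + 1) → M) (j : Fin (n + 1)) :
    ∏ i ∈ univ.erase j, f i = ∏ t : Fin n, f (j + t.succ) := by
  rw [← prod_image (s := univ) (g := Fin.succ) (f := fun s => f (j + s))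
    fun a _ b _ h => Fin.succ_injective _ h, Fin.image_succ_univ]
  exact (prod_equiv (Equiv.addLeft j) (fun s => by simp) fun _ _ => rfl).symm

theorem lintegral_prod_erase_cycle_lt_top {n : ℕ} (q : Fin (n + 1) → ℝ) (j : Fin (n + 1))
    (hq : ∀ i ≠ j, -1 < q i) :
    ∫⁻ x, ∏ i ∈ univ.erase j, ENNReal.ofReal (|x i - x (i + 1)| ^ q i)
        ∂Measure.pi (fun _ => volume.restrict (Icc (0 : ℝ) 1)) < ⊤ := by
  -- Cutting the cycle at edge `j` leaves the path `j + 1, j + 2, …, j`.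
  have hpath : ∀ x : Fin (n + 1) → ℝ,
      ∏ i ∈ univ.erase j, ENNReal.ofReal (|x i - x (i + 1)| ^ q i) =
        ∏ t : Fin n, ENNReal.ofReal
          (|(x ∘ Equiv.addLeft (j + 1)) t.castSucc - (x ∘ Equiv.addLeft (j + 1)) t.succ| ^
            q (j + t.succ)) := fun x => by
    rw [Fin.prod_univ_erase_eq_prod_add_succ]
    refine prod_congr rfl fun t _ => ?_
    have hsucc : j + t.succ = j + 1 + t.castSucc := by rw [← Fin.coeSucc_eq_succ]; abel
    simp only [Function.comp_apply, Equiv.coe_addLeft, hsucc, add_assoc (j + 1),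
      Fin.coeSucc_eq_succ]
  simp_rw [hpath]
  rw [lintegral_pi_comp_equiv (volume.restrict (Icc (0 : ℝ) 1)) _
    (fun y => ∏ t : Fin n, ENNReal.ofReal (|y t.castSucc - y t.succ| ^ q (j + t.succ)))]
  refine (lintegral_prod_path_le n _ fun t => hq _ ?_).trans_lt
    (ENNReal.prod_lt_top fun _ _ => ENNReal.ofReal_lt_top)
  simp

section Redistribution

variable {ι : Type*} [DecidableEq ι] {s : Finset ι} {j : ι} {d p : ι → ℝ}

theorem prod_rpow_le_prod_erase_rpow_of_nonneg (hj : j ∈ s) (hd : ∀ i ∈ s, 0 ≤ d i)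
    (hdj : d j ≤ 1) (hpj : 0 ≤ p j) :
    ∏ i ∈ s, d i ^ p i ≤ ∏ i ∈ s.erase j, d i ^ p i := by
  rw [← mul_prod_erase s _ hj]
  exact mul_le_of_le_one_left
    (prod_nonneg fun i hi => rpow_nonneg (hd i (mem_of_mem_erase hi)) _)
    (rpow_le_one (hd j hj) hdj hpj)

theorem prod_rpow_le_prod_erase_rpow_of_le {w : ι → ℝ} (hj : j ∈ s) (hd : ∀ i ∈ s, 0 ≤ d i)
    (hdj : ∀ i ∈ s, d i ≤ d j) (hp : ∀ i ∈ s, p i < 0) (hw : ∀ i ∈ s.erase j, 0 ≤ w i)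
    (hw1 : ∑ i ∈ s.erase j, w i = 1) :
    ∏ i ∈ s, d i ^ p i ≤ ∏ i ∈ s.erase j, d i ^ (p i + w i * p j) := by
  by_cases h0 : ∃ i ∈ s, d i = 0
  · obtain ⟨i, hi, hdi⟩ := h0
    rw [prod_eq_zero hi (by rw [hdi, zero_rpow (hp i hi).ne])]
    exact prod_nonneg fun i hi => rpow_nonneg (hd i (mem_of_mem_erase hi)) _
  push Not at h0
  have hpos : ∀ i ∈ s, 0 < d i := fun i hi => (hd i hi).lt_of_ne' (h0 i hi)
  calc ∏ i ∈ s, d i ^ p i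
      = d j ^ p j * ∏ i ∈ s.erase j, d i ^ p i := (mul_prod_erase s _ hj).symm
    _ = (∏ i ∈ s.erase j, d j ^ (w i * p j)) * ∏ i ∈ s.erase j, d i ^ p i := by
        rw [← rpow_sum_of_pos (hpos j hj), ← sum_mul, hw1, one_mul]
    _ ≤ (∏ i ∈ s.erase j, d i ^ (w i * p j)) * ∏ i ∈ s.erase j, d i ^ p i := by
        refine mul_le_mul_of_nonneg_right (prod_le_prod (fun i hi => ?_) fun i hi => ?_)
          (prod_nonneg fun i hi => rpow_nonneg (hd i (mem_of_mem_erase hi)) _)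
        · exact rpow_nonneg (hd j hj) _
        · exact rpow_le_rpow_of_nonpos (hpos i (mem_of_mem_erase hi))
            (hdj i (mem_of_mem_erase hi)) (mul_nonpos_of_nonneg_of_nonpos (hw i hi) (hp j hj).le)
    _ = ∏ i ∈ s.erase j, d i ^ (p i + w i * p j) := by
        rw [← prod_mul_distrib]
        refine prod_congr rfl fun i hi => ?_
        rw [← rpow_add (hpos i (mem_of_mem_erase hi)), add_comm]

end Redistribution

theorem neg_one_lt_add_div_mul {a b S : ℝ} (ha : -1 < a) (hS : 0 < S) (hbS : 0 < S + b) :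
    -1 < a + (1 + a) / S * b := by
  have h : a + (1 + a) / S * b + 1 = (1 + a) * (S + b) / S := by field_simp; ring
  have h1a : 0 < 1 + a := by linarith
  have : 0 < (1 + a) * (S + b) / S := by positivity
  linarith

theorem lintegral_cyclic_prod_lt_top_of_nonneg {n : ℕ} (p : Fin (n + 1) → ℝ)
    (hp : ∀ i, -1 < p i) (j : Fin (n + 1)) (hj : 0 ≤ p j) :
    ∫⁻ x, ENNReal.ofReal (∏ i, |x i - x (i + 1)| ^ p i)
      ∂Measure.pi (fun _ => volume.restrict (Icc (0 : ℝ) 1)) < ⊤ := by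
  refine lt_of_le_of_lt (lintegral_mono_ae ?_)
    (lintegral_prod_erase_cycle_lt_top p j fun i _ => hp i)
  filter_upwards [ae_pi_restrict_forall_mem volume measurableSet_Icc] with x hx
  rw [← ENNReal.ofReal_prod_of_nonneg fun i _ => rpow_nonneg (abs_nonneg _) _]
  refine ENNReal.ofReal_le_ofReal (prod_rpow_le_prod_erase_rpow_of_nonneg (mem_univ j)
    (fun i _ => abs_nonneg _) ?_ hj)
  exact abs_sub_le_of_nonneg_of_le (hx j).1 (hx j).2 (hx (j + 1)).1 (hx (j + 1)).2

theorem lintegral_cyclic_prod_lt_top_of_neg {n : ℕ} (p : Fin (n + 1) → ℝ)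
    (hp : ∀ i, -1 < p i) (hneg : ∀ i, p i < 0) (hsum : 0 < ∑ i, p i + n) :
    ∫⁻ x, ENNReal.ofReal (∏ i, |x i - x (i + 1)| ^ p i)
      ∂Measure.pi (fun _ => volume.restrict (Icc (0 : ℝ) 1)) < ⊤ := by
  set S : Fin (n + 1) → ℝ := fun j => ∑ i ∈ univ.erase j, (1 + p i)
  have hS : ∀ j, S j + p j = ∑ i, p i + n := fun j => by
    have hj : 1 + p j + S j = ∑ i, (1 + p i) :=
      add_sum_erase univ (fun i => 1 + p i) (mem_univ j)
    have htot : ∑ i, (1 + p i) = n + 1 + ∑ i, p i := by simp [sum_add_distrib]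
    linarith
  have hSpos : ∀ j, 0 < S j := fun j => by linarith [hS j, hneg j]
  have hbound : ∀ x : Fin (n + 1) → ℝ, ENNReal.ofReal (∏ i, |x i - x (i + 1)| ^ p i) ≤
      ∑ j, ∏ i ∈ univ.erase j,
        ENNReal.ofReal (|x i - x (i + 1)| ^ (p i + (1 + p i) / S j * p j)) := fun x => by
    obtain ⟨j, -, hj⟩ := exists_max_image univ (fun i => |x i - x (i + 1)|) univ_nonempty
    refine le_trans ?_ (single_le_sum (fun _ _ => zero_le) (mem_univ j))
    rw [← ENNReal.ofReal_prod_of_nonneg fun i _ => rpow_nonneg (abs_nonneg _) _]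
    refine ENNReal.ofReal_le_ofReal (prod_rpow_le_prod_erase_rpow_of_le (mem_univ j)
      (fun i _ => abs_nonneg _) hj (fun i _ => hneg i) (fun i _ => ?_) ?_)
    · exact div_nonneg (by linarith [hp i]) (hSpos j).le
    · rw [← sum_div, div_self (hSpos j).ne']
  refine (lintegral_mono hbound).trans_lt ?_
  rw [lintegral_finsetSum _ fun j _ => by fun_prop]
  exact ENNReal.sum_lt_top.2 fun j _ => lintegral_prod_erase_cycle_lt_top _ j
    fun i _ => neg_one_lt_add_div_mul (hp i) (hSpos j) (by linarith [hS j])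

theorem lintegral_cyclic_prod_lt_top {n : ℕ} (p : Fin (n + 1) → ℝ) (hp : ∀ i, -1 < p i)
    (hsum : 0 < ∑ i, p i + n) :
    ∫⁻ x in univ.pi fun _ => Icc (0 : ℝ) 1,
      ENNReal.ofReal (∏ i, |x i - x (i + 1)| ^ p i) < ⊤ := by
  rw [volume_pi, Measure.restrict_pi_pi]
  by_cases hA : ∃ j, 0 ≤ p j
  · obtain ⟨j, hj⟩ := hA
    exact lintegral_cyclic_prod_lt_top_of_nonneg p hp j hj
  · push Not at hA
    exact lintegral_cyclic_prod_lt_top_of_neg p hp hA hsum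

theorem cyc_val {n : ℕ} (x : Fin (n + 1) → ℝ) (i : Fin (n + 1)) : cyc x i = x i :=
  (dif_pos n.succ_pos).trans (congrArg x (Fin.ext (Nat.mod_eq_of_lt i.isLt)))

theorem cyc_val_add_one {n : ℕ} (x : Fin (n + 1) → ℝ) (i : Fin (n + 1)) :
    cyc x (i + 1) = x (i + 1) :=
  (dif_pos n.succ_pos).trans (congrArg x (Fin.ext (by simp [Fin.val_add])))

theorem cyclic_integral_finite_general (m : ℕ) (p : ℕ → ℝ)
    (hp : ∀ i < m, -1 < p i)
    (hsum : 0 < (∑ i ∈ Finset.range m, p i) + m - 1) :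
    (∫⁻ x in Set.univ.pi (fun _ : Fin m => Set.Icc (0 : ℝ) 1),
        ENNReal.ofReal (∏ i ∈ Finset.range m, |cyc x i - cyc x (i + 1)| ^ p i)) < ⊤ := by
  obtain ⟨n, rfl⟩ : ∃ n, m = n + 1 :=
    Nat.exists_eq_succ_of_ne_zero (by rintro rfl; norm_num at hsum)
  have hcyc : ∀ x : Fin (n + 1) → ℝ, ∏ i ∈ range (n + 1), |cyc x i - cyc x (i + 1)| ^ p i =
      ∏ i : Fin (n + 1), |x i - x (i + 1)| ^ p i := fun x => by
    rw [← Fin.prod_univ_eq_prod_range]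
    simp only [cyc_val, cyc_val_add_one]
  simp only [hcyc]
  refine lintegral_cyclic_prod_lt_top (fun i => p i) (fun i => hp i i.isLt) ?_
  rw [Fin.sum_univ_eq_sum_range (fun i => p i)]
  push_cast at hsum
  linarith

theorem cyclic_integral_finite (m : ℕ) (hm : 2 ≤ m) (p : ℕ → ℝ)
    (hp : ∀ i < m, -1 < p i)
    (hsum : 0 < (∑ i ∈ Finset.range m, p i) + m - 1) :
    (∫⁻ x in Set.univ.pi (fun _ : Fin m => Set.Icc (0 : ℝ) 1),
        ENNReal.ofReal (∏ i ∈ Finset.range m, |cyc x i - cyc x (i + 1)| ^ p i)) < ⊤ :=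
  cyclic_integral_finite_general m p hp hsum
end

section
/- Let m ≥ 2 be an integer and H ∈ ((m+1)/(2m), 1). Then B_m(2H-2, ..., 2H-2) = ∫_{[0,1]^m} |x_1-x_2|^{2H-2}|x_2-x_3|^{2H-2}⋯|x_m-x_1|^{2H-2} dx_1⋯dx_m is finite. -/
/-!
Write `p = 2H - 2` and `q = m p / (m - 1)`. Each factor `|x_i - x_{i+1}|` of the cyclic product
occurs in exactly `m - 1` of the `m` products obtained by deleting one factor, so weighted AM-GM
bounds the cyclic integrand by the average of these `m` products raised to the exponent `q`.
Deleting an edge turns the cycle into a path, and integrating a path out one endpoint at a time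
costs a factor `sup_v ∫₀¹ |v - t|^q dt ≤ ∫₋₁¹ |s|^q ds` per edge, which is finite because
`q > -1`; this is exactly the condition `2mH - m - 1 > 0`.
-/

open MeasureTheory Real

open Set Finset
open scoped ENNReal

theorem prod_rpow_le_sum_inv_card_mul_prod_erase {ι : Type*} [DecidableEq ι] {s : Finset ι}
    (hs : 2 ≤ #s) {a : ι → ℝ} (ha : ∀ i ∈ s, 0 ≤ a i) (p : ℝ) :
    ∏ i ∈ s, a i ^ p ≤ ∑ j ∈ s, (#s : ℝ)⁻¹ * ∏ i ∈ s.erase j, a i ^ (#s * p / (#s - 1)) := by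
  set q : ℝ := #s * p / (#s - 1)
  have hs' : (2 : ℝ) ≤ #s := by exact_mod_cast hs
  have hexp : q * (#s : ℝ)⁻¹ * ((#s - 1 : ℕ) : ℝ) = p := by
    rw [Nat.cast_sub (by omega), Nat.cast_one]
    have : (#s : ℝ) - 1 ≠ 0 := by linarith
    simp only [q]
    field_simp
  have hmean : ∏ i ∈ s, a i ^ p = ∏ j ∈ s, (∏ i ∈ s.erase j, a i ^ q) ^ (#s : ℝ)⁻¹ := calc
    ∏ i ∈ s, a i ^ p = ∏ i ∈ s, ∏ j ∈ s.erase i, a i ^ (q * (#s : ℝ)⁻¹) := by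
      refine prod_congr rfl fun i hi => ?_
      rw [prod_const, card_erase_of_mem hi, ← rpow_natCast, ← rpow_mul (ha i hi), hexp]
    _ = ∏ j ∈ s, ∏ i ∈ s.erase j, a i ^ (q * (#s : ℝ)⁻¹) :=
      prod_comm' fun i j => by simp only [mem_erase]; tauto
    _ = ∏ j ∈ s, (∏ i ∈ s.erase j, a i ^ q) ^ (#s : ℝ)⁻¹ := by
      refine prod_congr rfl fun j _ => ?_
      rw [← finsetProd_rpow _ _ fun i hi => rpow_nonneg (ha i (mem_of_mem_erase hi)) _]
      exact prod_congr rfl fun i hi => rpow_mul (ha i (mem_of_mem_erase hi)) _ _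
  rw [hmean]
  refine geom_mean_le_arith_mean_weighted s _ _ (fun _ _ => by positivity) ?_
    fun j _ => prod_nonneg fun i hi => rpow_nonneg (ha i (mem_of_mem_erase hi)) _
  rw [sum_const, nsmul_eq_mul, mul_inv_cancel₀ (by linarith)]

theorem Fin.prod_univ_erase_eq_prod_castSucc {M : Type*} [CommMonoid M] {n : ℕ}
    (f : Fin (n + 1) → M) (j : Fin (n + 1)) :
    ∏ i ∈ univ.erase j, f i = ∏ k : Fin n, f (j + 1 + k.castSucc) := by
  have hj : j + 1 + Fin.last n = j := by rw [add_assoc, add_comm 1, Fin.last_add_one, add_zero]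
  have hlast : (univ : Finset (Fin (n + 1))).erase (Fin.last n) = univ.map Fin.castSuccEmb := by
    ext i; simp [Fin.exists_castSucc_eq]
  calc ∏ i ∈ univ.erase j, f i
      = ∏ i ∈ (univ.map (Equiv.addLeft (j + 1)).toEmbedding).erase
          ((Equiv.addLeft (j + 1)).toEmbedding (last n)), f i := by
        simp only [map_univ_equiv, Equiv.coe_toEmbedding, Equiv.coe_addLeft, hj]
    _ = ∏ k : Fin n, f (j + 1 + k.castSucc) := by rw [← map_erase, prod_map, hlast, prod_map]; rfl

theorem prod_range_cyc {M : Type*} [CommMonoid M] {n : ℕ} (x : Fin (n + 1) → ℝ)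
    (g : ℝ → ℝ → M) :
    ∏ i ∈ range (n + 1), g (cyc x i) (cyc x (i + 1)) = ∏ i : Fin (n + 1), g (x i) (x (i + 1)) := by
  rw [prod_range]
  refine prod_congr rfl fun i _ => ?_
  simp only [cyc, dif_pos (Nat.succ_pos n), Nat.mod_eq_of_lt i.isLt]
  congr 2
  ext
  simp [Fin.val_add]

theorem setLIntegral_Icc_comp_sub_left_le {v : ℝ} (hv : v ∈ Icc (0 : ℝ) 1) (g : ℝ → ℝ≥0∞) :
    ∫⁻ t in Icc 0 1, g (v - t) ≤ ∫⁻ s in Icc (-1) 1, g s := by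
  rw [(volume.measurePreserving_sub_left v).setLIntegral_comp_emb
    (measurableEmbedding_subLeft v), image_const_sub_Icc]
  exact lintegral_mono_set (Icc_subset_Icc (by linarith [hv.1]) (by linarith [hv.2]))

theorem intervalIntegrable_abs_rpow {q : ℝ} (hq : -1 < q) (a b : ℝ) :
    IntervalIntegrable (fun x => |x| ^ q) volume a b := by
  simpa [Complex.norm_cpow_real] using
    (intervalIntegral.intervalIntegrable_cpow' (a := a) (b := b) (r := q) (by simpa)).norm

theorem setLIntegral_Icc_abs_rpow_lt_top {q : ℝ} (hq : -1 < q) :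
    ∫⁻ s in Icc (-1 : ℝ) 1, ENNReal.ofReal (|s| ^ q) < ⊤ :=
  ((intervalIntegrable_iff_integrableOn_Icc_of_le (by norm_num)).mp
    (intervalIntegrable_abs_rpow hq (-1) 1)).lintegral_lt_top

section Chain

variable {α : Type*} [MeasurableSpace α] {μ : Measure α} [IsProbabilityMeasure μ]
  {K : α → α → ℝ≥0∞} {C : ℝ≥0∞}

theorem measurable_prod_chain (hK : Measurable (Function.uncurry K)) (n : ℕ) :
    Measurable fun y : Fin (n + 1) → α => ∏ k : Fin n, K (y k.castSucc) (y k.succ) :=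
  Finset.measurable_prod _ fun k _ =>
    hK.comp (f := fun y : Fin (n + 1) → α => (y k.castSucc, y k.succ)) (by fun_prop)

theorem lintegral_prod_chain_le (hK : Measurable (Function.uncurry K))
    (hC : ∀ᵐ v ∂μ, ∫⁻ t, K v t ∂μ ≤ C) (n : ℕ) :
    ∫⁻ y, ∏ k : Fin n, K (y k.castSucc) (y k.succ) ∂Measure.pi (fun _ : Fin (n + 1) => μ)
      ≤ C ^ n := by
  induction n with
  | zero => simp
  | succ n ih =>
    let e := MeasurableEquiv.piFinSuccAbove (fun _ : Fin (n + 2) => α) (Fin.last (n + 1))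
    have he : ∀ p, e.symm p = Fin.snoc p.2 p.1 := fun p => by
      simp [e, MeasurableEquiv.piFinSuccAbove, Fin.snocEquiv]
    have hsplit : ∀ (t : α) (z : Fin (n + 1) → α),
        ∏ k : Fin (n + 1), K ((Fin.snoc z t : Fin (n + 2) → α) k.castSucc)
          ((Fin.snoc z t : Fin (n + 2) → α) k.succ)
        = (∏ k : Fin n, K (z k.castSucc) (z k.succ)) * K (z (Fin.last n)) t := by
      intro t z
      simp only [Fin.prod_univ_castSucc, Fin.snoc_castSucc, Fin.succ_castSucc, Fin.succ_last,
        Fin.snoc_last]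
    rw [← ((measurePreserving_piFinSuccAbove (fun _ => μ) (Fin.last (n + 1))).symm e)
      |>.lintegral_comp_emb e.symm.measurableEmbedding]
    simp only [he, hsplit]
    calc _ = ∫⁻ z, ∫⁻ t, (∏ k : Fin n, K (z k.castSucc) (z k.succ)) * K (z (Fin.last n)) t ∂μ
          ∂Measure.pi (fun _ => μ) :=
          lintegral_prod_symm' _ <| ((measurable_prod_chain hK n).comp measurable_snd).mul <|
            hK.comp (((measurable_pi_apply _).comp measurable_snd).prodMk measurable_fst)
      _ = ∫⁻ z, (∏ k : Fin n, K (z k.castSucc) (z k.succ)) * ∫⁻ t, K (z (Fin.last n)) t ∂μ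
          ∂Measure.pi (fun _ => μ) :=
          lintegral_congr fun z => lintegral_const_mul _ <|
            hK.comp (measurable_const.prodMk measurable_id)
      _ ≤ ∫⁻ z, (∏ k : Fin n, K (z k.castSucc) (z k.succ)) * C ∂Measure.pi (fun _ => μ) := by
          refine lintegral_mono_ae ?_
          filter_upwards [Measure.tendsto_eval_ae_ae.eventually hC] with z hz
          gcongr
      _ = (∫⁻ z, ∏ k : Fin n, K (z k.castSucc) (z k.succ) ∂Measure.pi (fun _ => μ)) * C :=
          lintegral_mul_const _ (measurable_prod_chain hK n)
      _ ≤ C ^ (n + 1) := by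
          rw [pow_succ]
          gcongr

theorem lintegral_prod_cycle_erase_le (hK : Measurable (Function.uncurry K))
    (hC : ∀ᵐ v ∂μ, ∫⁻ t, K v t ∂μ ≤ C) {n : ℕ} (j : Fin (n + 1)) :
    ∫⁻ x, ∏ i ∈ univ.erase j, K (x i) (x (i + 1)) ∂Measure.pi (fun _ : Fin (n + 1) => μ)
      ≤ C ^ n := by
  have hpath : ∀ x : Fin (n + 1) → α, ∏ i ∈ univ.erase j, K (x i) (x (i + 1))
      = ∏ k : Fin n, K (x (j + 1 + k.castSucc)) (x (j + 1 + k.succ)) := fun x => by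
    rw [Fin.prod_univ_erase_eq_prod_castSucc (fun i => K (x i) (x (i + 1)))]
    simp only [add_assoc, Fin.coeSucc_eq_succ]
  simp only [hpath]
  calc _ = ∫⁻ y, ∏ k : Fin n, K (y k.castSucc) (y k.succ) ∂Measure.pi (fun _ => μ) :=
        ((measurePreserving_piCongrLeft (fun _ => μ) (Equiv.addLeft (j + 1))).symm _)
          |>.lintegral_comp_emb (MeasurableEquiv.measurableEmbedding _) _
    _ ≤ C ^ n := lintegral_prod_chain_le hK hC n

theorem lintegral_ofReal_prod_cycle_rpow_le {f : α → α → ℝ} (hf₀ : ∀ v t, 0 ≤ f v t)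
    (hf : Measurable (Function.uncurry f)) {n : ℕ} (hn : 1 ≤ n) (p : ℝ)
    (hC : ∀ᵐ v ∂μ, ∫⁻ t, ENNReal.ofReal (f v t ^ ((n + 1) * p / n)) ∂μ ≤ C) :
    ∫⁻ x, ENNReal.ofReal (∏ i, f (x i) (x (i + 1)) ^ p) ∂Measure.pi (fun _ : Fin (n + 1) => μ)
      ≤ C ^ n := by
  set q : ℝ := (n + 1) * p / n
  let K : α → α → ℝ≥0∞ := fun v t => ENNReal.ofReal (f v t ^ q)
  have hK : Measurable (Function.uncurry K) := ENNReal.measurable_ofReal.comp (hf.pow_const q)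
  have hw : ENNReal.ofReal ((n : ℝ) + 1)⁻¹ = ((n + 1 : ℕ) : ℝ≥0∞)⁻¹ := by
    rw [ENNReal.ofReal_inv_of_pos (by positivity)]
    norm_cast
  have hAMGM : ∀ x : Fin (n + 1) → α, ENNReal.ofReal (∏ i, f (x i) (x (i + 1)) ^ p)
      ≤ ∑ j, ((n + 1 : ℕ) : ℝ≥0∞)⁻¹ * ∏ i ∈ univ.erase j, K (x i) (x (i + 1)) := by
    intro x
    have := prod_rpow_le_sum_inv_card_mul_prod_erase (s := univ) (by simpa using hn)
      (a := fun i => f (x i) (x (i + 1))) (fun _ _ => hf₀ _ _) p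
    simp only [card_univ, Fintype.card_fin, Nat.cast_add, Nat.cast_one, add_sub_cancel_right]
      at this
    refine (ENNReal.ofReal_le_ofReal this).trans_eq ?_
    have hpow : ∀ v t, 0 ≤ f v t ^ q := fun v t => rpow_nonneg (hf₀ v t) q
    rw [ENNReal.ofReal_sum_of_nonneg fun j _ =>
      mul_nonneg (by positivity) (prod_nonneg fun i _ => hpow _ _)]
    refine sum_congr rfl fun j _ => ?_
    rw [ENNReal.ofReal_mul (by positivity), hw,
      ENNReal.ofReal_prod_of_nonneg fun i _ => hpow _ _]
  calc _ ≤ ∫⁻ x, ∑ j, ((n + 1 : ℕ) : ℝ≥0∞)⁻¹ * ∏ i ∈ univ.erase j, K (x i) (x (i + 1))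
          ∂Measure.pi (fun _ : Fin (n + 1) => μ) := lintegral_mono hAMGM
    _ = ∑ j, ((n + 1 : ℕ) : ℝ≥0∞)⁻¹ * ∫⁻ x, ∏ i ∈ univ.erase j, K (x i) (x (i + 1))
          ∂Measure.pi (fun _ : Fin (n + 1) => μ) := by
      rw [lintegral_finsetSum _ fun j _ => by fun_prop]
      exact sum_congr rfl fun j _ => lintegral_const_mul _ (by fun_prop)
    _ ≤ ∑ _j : Fin (n + 1), ((n + 1 : ℕ) : ℝ≥0∞)⁻¹ * C ^ n := by
      gcongr with j
      exact lintegral_prod_cycle_erase_le hK hC j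
    _ = C ^ n := by
      rw [sum_const, card_univ, Fintype.card_fin, nsmul_eq_mul, ← mul_assoc,
        ENNReal.mul_inv_cancel (by positivity) (ENNReal.natCast_ne_top _), one_mul]

end Chain

theorem cyclic_integral_finite_equal_exponents_general (m : ℕ) (hm : 2 ≤ m) (H : ℝ)
    (hH : (m + 1) / (2 * m) < H) :
    (∫⁻ x in Set.univ.pi (fun _ : Fin m => Set.Icc (0 : ℝ) 1),
        ENNReal.ofReal (∏ i ∈ Finset.range m,
          |cyc x i - cyc x (i + 1)| ^ (2 * H - 2))) < ⊤ := by
  obtain ⟨n, rfl⟩ : ∃ n, m = n + 1 := ⟨m - 1, by omega⟩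
  have hn : 1 ≤ n := by omega
  set q : ℝ := (n + 1) * (2 * H - 2) / n
  have hq : -1 < q := by
    have hn' : (1 : ℝ) ≤ n := by exact_mod_cast hn
    push_cast at hH
    rw [div_lt_iff₀ (by positivity)] at hH
    rw [lt_div_iff₀ (by positivity)]
    nlinarith
  have : IsProbabilityMeasure (volume.restrict (Icc (0 : ℝ) 1)) := ⟨by simp⟩
  rw [volume_pi, Measure.restrict_pi_pi]
  simp only [prod_range_cyc _ (fun a b => |a - b| ^ (2 * H - 2))]
  refine (lintegral_ofReal_prod_cycle_rpow_le (fun _ _ => abs_nonneg _) (by fun_prop) hn _ ?_)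
    |>.trans_lt (ENNReal.pow_lt_top (setLIntegral_Icc_abs_rpow_lt_top hq))
  filter_upwards [ae_restrict_mem measurableSet_Icc] with v hv
  exact setLIntegral_Icc_comp_sub_left_le hv fun s => ENNReal.ofReal (|s| ^ q)

theorem cyclic_integral_finite_equal_exponents (m : ℕ) (hm : 2 ≤ m) (H : ℝ)
    (hH : (m + 1) / (2 * m) < H) (hH1 : H < 1) :
    (∫⁻ x in Set.univ.pi (fun _ : Fin m => Set.Icc (0 : ℝ) 1),
        ENNReal.ofReal (∏ i ∈ Finset.range m,
          |cyc x i - cyc x (i + 1)| ^ (2 * H - 2))) < ⊤ :=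
  cyclic_integral_finite_equal_exponents_general m hm H hH
end

section
/- Let θ > 0, H ∈ (1/2, 1), and define the double integral I_T^{(2,2)} = ∫_{[0,T]²} e^{-θx_2} |x_2 - T|^{2H-2} e^{-θ(T - x_4)} |x_4|^{2H-2} dx_2 dx_4. Then T^{4-4H} I_T^{(2,2)} → θ^{-2} as T → ∞. -/
/-!
After the substitution `x₄ ↦ T - x₄` the double integral factorises as `K(T)²` with
`K(T) = ∫₀ᵀ e^{-θx} (T - x)^α dx` and `α = 2H - 2 ∈ (-1, 0)`, so it suffices to show
`T^{-α} K(T) → 1/θ`. Since `α ≤ 0`, `T^{-α} (T - x)^α ≥ 1` gives the lower bound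
`∫₀ᵀ e^{-θx} dx`. For the upper bound split `[0, T]` at `c = √T`: on `[0, c]` the factor
`T^{-α} (T - x)^α` is at most `(1 - c/T)^α → 1`, while on `[c, T]` the exponential is at most
`e^{-θc}`, which beats the polynomial size `T^{α+1}/(α+1)` of `∫_c^T (T - x)^α dx`.
-/

open MeasureTheory Real Filter Set Topology

noncomputable def expRpowConv (θ α T : ℝ) : ℝ :=
  ∫ x in (0:ℝ)..T, exp (-θ * x) * (T - x) ^ α

section

variable {θ α : ℝ}

lemma integral_exp_neg_mul (hθ : θ ≠ 0) (T : ℝ) :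
    ∫ x in (0:ℝ)..T, exp (-θ * x) = (1 - exp (-θ * T)) / θ := by
  rw [intervalIntegral.integral_comp_mul_left exp (neg_ne_zero.2 hθ), integral_exp, mul_zero,
    exp_zero, smul_eq_mul]
  field_simp
  ring

lemma integral_sub_rpow (hα : -1 < α) (a T : ℝ) :
    ∫ x in a..T, (T - x) ^ α = (T - a) ^ (α + 1) / (α + 1) := by
  rw [intervalIntegral.integral_comp_sub_left (fun u : ℝ => u ^ α) T, sub_self,
    integral_rpow (Or.inl hα), zero_rpow (by linarith)]
  ring

lemma intervalIntegrable_sub_rpow (hα : -1 < α) (T a b : ℝ) :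
    IntervalIntegrable (fun x => (T - x) ^ α) volume a b := by
  simpa only [sub_sub_cancel] using
    (intervalIntegral.intervalIntegrable_rpow' (a := T - a) (b := T - b) hα).comp_sub_left T

lemma intervalIntegrable_exp_mul_sub_rpow (hα : -1 < α) (T a b : ℝ) :
    IntervalIntegrable (fun x => exp (-θ * x) * (T - x) ^ α) volume a b :=
  (intervalIntegrable_sub_rpow hα T a b).continuousOn_mul (by fun_prop)

lemma one_sub_exp_div_le_rpow_neg_mul_expRpowConv (hθ : 0 < θ) (hα : -1 < α) (hα₀ : α ≤ 0)
    {T : ℝ} (hT : 0 < T) : (1 - exp (-θ * T)) / θ ≤ T ^ (-α) * expRpowConv θ α T := by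
  rw [← integral_exp_neg_mul hθ.ne', expRpowConv, ← intervalIntegral.integral_const_mul]
  refine intervalIntegral.integral_mono_on_of_le_Ioo hT.le
    (Continuous.intervalIntegrable (by fun_prop) _ _)
    ((intervalIntegrable_exp_mul_sub_rpow hα T 0 T).const_mul _) fun x hx => ?_
  have hTx : 0 < T - x := sub_pos.2 hx.2
  have hkernel : 1 ≤ T ^ (-α) * (T - x) ^ α := by
    rw [rpow_neg hT.le, ← div_eq_inv_mul, one_le_div (rpow_pos_of_pos hT _)]
    exact rpow_le_rpow_of_nonpos hTx (by linarith [hx.1]) hα₀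
  calc exp (-θ * x) = exp (-θ * x) * 1 := (mul_one _).symm
    _ ≤ exp (-θ * x) * (T ^ (-α) * (T - x) ^ α) := by gcongr
    _ = T ^ (-α) * (exp (-θ * x) * (T - x) ^ α) := by ring

lemma integral_exp_mul_sub_rpow_le_rpow_div (hθ : 0 < θ) (hα : -1 < α) (hα₀ : α ≤ 0)
    {c T : ℝ} (hc : 0 ≤ c) (hcT : c < T) :
    ∫ x in (0:ℝ)..c, exp (-θ * x) * (T - x) ^ α ≤ (T - c) ^ α / θ := calc
  _ ≤ ∫ x in (0:ℝ)..c, (T - c) ^ α * exp (-θ * x) := by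
      refine intervalIntegral.integral_mono_on hc (intervalIntegrable_exp_mul_sub_rpow hα T 0 c)
        (Continuous.intervalIntegrable (by fun_prop) _ _) fun x hx => ?_
      rw [mul_comm]
      exact mul_le_mul_of_nonneg_right
        (rpow_le_rpow_of_nonpos (by linarith) (by linarith [hx.2]) hα₀) (exp_pos _).le
  _ = (T - c) ^ α * ((1 - exp (-θ * c)) / θ) := by
      rw [intervalIntegral.integral_const_mul, integral_exp_neg_mul hθ.ne']
  _ ≤ (T - c) ^ α * (1 / θ) := by
      gcongr
      linarith [exp_pos (-θ * c)]
  _ = (T - c) ^ α / θ := mul_one_div _ _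

lemma integral_exp_mul_sub_rpow_le_exp_mul (hθ : 0 ≤ θ) (hα : -1 < α) {c T : ℝ} (hc : 0 ≤ c)
    (hcT : c ≤ T) :
    ∫ x in c..T, exp (-θ * x) * (T - x) ^ α ≤ exp (-θ * c) * (T ^ (α + 1) / (α + 1)) := calc
  _ ≤ ∫ x in c..T, exp (-θ * c) * (T - x) ^ α := by
      refine intervalIntegral.integral_mono_on hcT (intervalIntegrable_exp_mul_sub_rpow hα T c T)
        ((intervalIntegrable_sub_rpow hα T c T).const_mul _) fun x hx => ?_
      exact mul_le_mul_of_nonneg_right (exp_le_exp.2 (by nlinarith [hx.1]))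
        (rpow_nonneg (by linarith [hx.2]) _)
  _ = exp (-θ * c) * ((T - c) ^ (α + 1) / (α + 1)) := by
      rw [intervalIntegral.integral_const_mul, integral_sub_rpow hα]
  _ ≤ exp (-θ * c) * (T ^ (α + 1) / (α + 1)) := by
      gcongr <;> linarith

lemma rpow_neg_mul_expRpowConv_le (hθ : 0 < θ) (hα : -1 < α) (hα₀ : α ≤ 0) {c T : ℝ}
    (hc : 0 ≤ c) (hcT : c < T) :
    T ^ (-α) * expRpowConv θ α T ≤ (1 - c / T) ^ α / θ + T * exp (-θ * c) / (α + 1) := by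
  have hT : 0 < T := hc.trans_lt hcT
  have hhead : T ^ (-α) * ((T - c) ^ α / θ) = (1 - c / T) ^ α / θ := by
    rw [one_sub_div hT.ne', div_rpow (by linarith) hT.le, rpow_neg hT.le]
    ring
  have htail :
      T ^ (-α) * (exp (-θ * c) * (T ^ (α + 1) / (α + 1))) = T * exp (-θ * c) / (α + 1) := by
    have hpow : T ^ (-α) * T ^ (α + 1) = T := by rw [← rpow_add hT, neg_add_cancel_left, rpow_one]
    linear_combination exp (-θ * c) / (α + 1) * hpow
  rw [expRpowConv, ← intervalIntegral.integral_add_adjacent_intervals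
    (intervalIntegrable_exp_mul_sub_rpow hα T 0 c) (intervalIntegrable_exp_mul_sub_rpow hα T c T),
    mul_add, ← hhead, ← htail]
  gcongr
  · exact integral_exp_mul_sub_rpow_le_rpow_div hθ hα hα₀ hc hcT
  · exact integral_exp_mul_sub_rpow_le_exp_mul hθ.le hα hc hcT.le

lemma tendsto_rpow_neg_mul_expRpowConv (hθ : 0 < θ) (hα : -1 < α) (hα₀ : α ≤ 0) :
    Tendsto (fun T => T ^ (-α) * expRpowConv θ α T) atTop (𝓝 θ⁻¹) := by
  have hexp : Tendsto (fun T => exp (-θ * T)) atTop (𝓝 0) := by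
    simpa using tendsto_rpow_mul_exp_neg_mul_atTop_nhds_zero 0 θ hθ
  have hlower : Tendsto (fun T => (1 - exp (-θ * T)) / θ) atTop (𝓝 θ⁻¹) := by
    simpa using (hexp.const_sub 1).div_const θ
  have hratio : Tendsto (fun T => √T / T) atTop (𝓝 0) := by
    simp_rw [sqrt_div_self']
    exact tendsto_const_nhds.div_atTop tendsto_sqrt_atTop
  have hdecay : Tendsto (fun T => T * exp (-θ * √T)) atTop (𝓝 0) := by
    refine ((tendsto_rpow_mul_exp_neg_mul_atTop_nhds_zero 2 θ hθ).comp tendsto_sqrt_atTop).congr' ?_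
    filter_upwards [eventually_ge_atTop 0] with T hT
    simp [sq_sqrt hT]
  have hupper : Tendsto (fun T => (1 - √T / T) ^ α / θ + T * exp (-θ * √T) / (α + 1)) atTop
      (𝓝 θ⁻¹) := by
    have hpow := (continuousAt_rpow_const 1 α (Or.inl one_ne_zero)).tendsto.comp
      (by simpa using hratio.const_sub 1)
    simpa using (hpow.div_const θ).add (hdecay.div_const (α + 1))
  refine tendsto_of_tendsto_of_tendsto_of_le_of_le' hlower hupper ?_ ?_
  · filter_upwards [eventually_gt_atTop 0] with T hT
    exact one_sub_exp_div_le_rpow_neg_mul_expRpowConv hθ hα hα₀ hT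
  · filter_upwards [eventually_gt_atTop 1] with T hT
    exact rpow_neg_mul_expRpowConv_le hθ hα hα₀ (sqrt_nonneg T) (sqrt_lt_self_iff.2 hT)

lemma setIntegral_Icc_eq_expRpowConv {T : ℝ} (hT : 0 ≤ T) :
    ∫ x in Icc 0 T, exp (-θ * x) * |x - T| ^ α = expRpowConv θ α T := by
  rw [integral_Icc_eq_integral_Ioc, ← intervalIntegral.integral_of_le hT, expRpowConv]
  refine intervalIntegral.integral_congr fun x hx => ?_
  rw [uIcc_of_le hT] at hx
  simp only [abs_of_nonpos (sub_nonpos.2 hx.2), neg_sub]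

lemma setIntegral_Icc_reflect_eq_expRpowConv {T : ℝ} (hT : 0 ≤ T) :
    ∫ x in Icc 0 T, exp (-θ * (T - x)) * |x| ^ α = expRpowConv θ α T := by
  have hreflect := intervalIntegral.integral_comp_sub_left (a := 0) (b := T)
    (fun x => exp (-θ * x) * (T - x) ^ α) T
  rw [sub_zero, sub_self] at hreflect
  rw [integral_Icc_eq_integral_Ioc, ← intervalIntegral.integral_of_le hT, expRpowConv, ← hreflect]
  refine intervalIntegral.integral_congr fun x hx => ?_
  rw [uIcc_of_le hT] at hx
  simp only [abs_of_nonneg hx.1, sub_sub_cancel]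

lemma integral_Icc_integral_Icc_eq_expRpowConv_sq {T : ℝ} (hT : 0 ≤ T) :
    ∫ x₂ in Icc 0 T, ∫ x₄ in Icc 0 T,
      exp (-θ * x₂) * |x₂ - T| ^ α * exp (-θ * (T - x₄)) * |x₄| ^ α = expRpowConv θ α T ^ 2 := calc
  _ = ∫ x₂ in Icc 0 T, (exp (-θ * x₂) * |x₂ - T| ^ α) *
        ∫ x₄ in Icc 0 T, exp (-θ * (T - x₄)) * |x₄| ^ α := by
      simp_rw [← integral_const_mul, mul_assoc]
  _ = expRpowConv θ α T ^ 2 := by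
      rw [integral_mul_const, setIntegral_Icc_eq_expRpowConv hT,
        setIntegral_Icc_reflect_eq_expRpowConv hT, sq]

end

theorem I22_limit (θ H : ℝ) (hθ : 0 < θ) (hH : H ∈ Set.Ioo (1/2 : ℝ) 1) :
    Tendsto (fun T : ℝ =>
        T ^ (4 - 4 * H) *
          ∫ x2 in Set.Icc (0:ℝ) T, ∫ x4 in Set.Icc (0:ℝ) T,
            Real.exp (-θ * x2) * |x2 - T| ^ (2 * H - 2) *
              Real.exp (-θ * (T - x4)) * |x4| ^ (2 * H - 2))
      atTop (nhds (θ ^ (-2 : ℝ))) := by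
  have hK := (tendsto_rpow_neg_mul_expRpowConv (α := 2 * H - 2) hθ (by linarith [hH.1])
    (by linarith [hH.2])).pow 2
  rw [rpow_neg hθ.le, rpow_two, ← inv_pow]
  refine hK.congr' ?_
  filter_upwards [eventually_gt_atTop 0] with T hT
  rw [integral_Icc_integral_Icc_eq_expRpowConv_sq hT.le, mul_pow, ← rpow_natCast,
    ← rpow_mul hT.le]
  congr 2
  push_cast
  ring
end
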